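/- Let V be a real vector space of dimension 2n with n ≥ 1, let ω be an alternating 2-form on V, and let ξ, η be linear functionals on V such that the alternating 2n-form ω^{n-1} ∧ ξ ∧ η is nonzero. Then ξ and η are linearly independent, the subspace D = ker ξ ∩ ker η has dimension 2n − 2, and the restriction of ω to D is a nondegenerate alternating 2-form on D. -/

import Mathlib

/-!
Let `α = ω^(n-1) ∧ ξ ∧ η` and `D = ker ξ ∩ ker η`. Evaluate `α` on a basis of `V` extending a
basis of a subspace `W ≤ D`: a shuffle term survives only if the slots of `ξ` and `η` receive two
distinct basis vectors outside `W`. If `ξ, η` were dependent, `D` would have codimension at most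
one, leaving no room for this; hence they are independent and `D` has codimension two. Taking
`W = D`, the remaining `2n - 2` vectors of a surviving term then form a basis of `D`. If some
`v ≠ 0` in `D` were `ω`-orthogonal to `D`, then `ω^(n-1)` would vanish on `D`: computed on a
basis of `D` through `v`, each of its terms pairs `v` with a vector of `D`.
-/

/-- The wedge product of two real-valued alternating forms, via `AlternatingMap.domCoprod`. -/
noncomputable def wedge {V : Type*} [AddCommGroup V] [Module ℝ V] {k l : ℕ}
    (f : V [⋀^Fin k]→ₗ[ℝ] ℝ) (g : V [⋀^Fin l]→ₗ[ℝ] ℝ) : V [⋀^Fin (k + l)]→ₗ[ℝ] ℝ :=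
  ((TensorProduct.lid ℝ ℝ).toLinearMap.compAlternatingMap (f.domCoprod g)).domDomCongr
    finSumFinEquiv

/-- The `k`-th wedge power `ω^k` of an alternating `2`-form `ω`. -/
noncomputable def wedgePow {V : Type*} [AddCommGroup V] [Module ℝ V]
    (ω : V [⋀^Fin 2]→ₗ[ℝ] ℝ) : (k : ℕ) → V [⋀^Fin (2 * k)]→ₗ[ℝ] ℝ
  | 0 => AlternatingMap.constOfIsEmpty ℝ V (Fin 0) 1
  | k + 1 => wedge (wedgePow ω k) ω

/-- A linear functional viewed as an alternating `1`-form. -/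
noncomputable def oneForm {V : Type*} [AddCommGroup V] [Module ℝ V]
    (ξ : V →ₗ[ℝ] ℝ) : V [⋀^Fin 1]→ₗ[ℝ] ℝ :=
  AlternatingMap.ofSubsingleton ℝ V ℝ (0 : Fin 1) ξ

open Module Function Sum

theorem finrank_ker_inf_ker_add_finrank_span {K V : Type*} [Field K] [AddCommGroup V]
    [Module K V] [FiniteDimensional K V] (ξ η : V →ₗ[K] K) :
    finrank K ↥(LinearMap.ker ξ ⊓ LinearMap.ker η) + (Set.range ![ξ, η]).finrank K =
      finrank K V := by
  have hD : (Submodule.span K (Set.range ![ξ, η])).dualCoannihilator =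
      LinearMap.ker ξ ⊓ LinearMap.ker η :=
    SetLike.coe_injective <| by
      ext x
      simp [Submodule.coe_dualCoannihilator_span, Matrix.range_cons, and_comm]
  rw [add_comm, ← hD]
  exact Subspace.finrank_add_finrank_dualCoannihilator_eq _

theorem Submodule.exists_basis_sum_inl_mem {K V : Type*} [Field K] [AddCommGroup V]
    [Module K V] [FiniteDimensional K V] (W : Submodule K V) :
    ∃ (m : ℕ) (b : Basis (Fin (finrank K W) ⊕ Fin m) K V),
      (∀ i, b (inl i) ∈ W) ∧ finrank K W + m = finrank K V := by
  obtain ⟨C, hC⟩ := W.exists_isCompl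
  refine ⟨finrank K C, ((finBasis K W).prod (finBasis K C)).map (W.prodEquivOfIsCompl C hC),
    fun i => ?_, Submodule.finrank_add_eq_of_isCompl hC⟩
  simp

theorem AlternatingMap.apply_eq_zero_of_forall_fin_two {R M N : Type*} [CommRing R]
    [AddCommGroup M] [Module R M] [AddCommGroup N] [Module R N]
    (ω : M [⋀^Fin 2]→ₗ[R] N) (w : Fin 2 → M) (a : Fin 2) (h : ∀ b, ω ![w a, w b] = 0) :
    ω w = 0 := by
  fin_cases a
  · convert h 1
    ext i; fin_cases i <;> rfl
  · have hswap : w ∘ Equiv.swap 0 1 = ![w 1, w 0] := by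
      ext i; fin_cases i <;> rfl
    rw [← neg_eq_zero, ← ω.map_swap w zero_ne_one, hswap]
    exact h 0

section Wedge

variable {V : Type*} [AddCommGroup V] [Module ℝ V]

theorem wedge_apply_eq_zero_of_forall_perm {k l : ℕ} (f : V [⋀^Fin k]→ₗ[ℝ] ℝ)
    (g : V [⋀^Fin l]→ₗ[ℝ] ℝ) (u : Fin (k + l) → V)
    (h : ∀ σ : Equiv.Perm (Fin k ⊕ Fin l),
      f (fun i => u (finSumFinEquiv (σ (inl i)))) = 0 ∨
      g (fun i => u (finSumFinEquiv (σ (inr i)))) = 0) :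
    wedge f g u = 0 := by
  suffices (f.domCoprod g) (u ∘ finSumFinEquiv) = 0 by
    simp [wedge, this]
  rw [AlternatingMap.domCoprod_apply, sum_apply]
  refine Finset.sum_eq_zero fun σ _ => ?_
  induction σ using Quotient.inductionOn' with
  | h σ =>
    rw [AlternatingMap.domCoprod.summand_mk'']
    rcases h σ with h0 | h0 <;> simp [h0]

theorem wedge_wedge_oneForm_apply_eq_zero {q : ℕ} (β : V [⋀^Fin q]→ₗ[ℝ] ℝ)
    (ξ η : V →ₗ[ℝ] ℝ) (u : Fin (q + 1 + 1) → V)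
    (h : ∀ (e : Fin q → Fin (q + 1 + 1)) (j k : Fin (q + 1 + 1)), Injective e → j ≠ k →
      (∀ i, e i ≠ j ∧ e i ≠ k) → β (u ∘ e) = 0 ∨ ξ (u j) = 0 ∨ η (u k) = 0) :
    wedge (wedge β (oneForm ξ)) (oneForm η) u = 0 := by
  refine wedge_apply_eq_zero_of_forall_perm _ _ _ fun σ => ?_
  set k := finSumFinEquiv (σ (inr 0))
  by_cases hk : η (u k) = 0
  · exact Or.inr hk
  refine Or.inl (wedge_apply_eq_zero_of_forall_perm _ _ _ fun τ => ?_)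
  set s : Fin (q + 1) → Fin (q + 1 + 1) := fun i => finSumFinEquiv (σ (inl i))
  have hs : Injective s := finSumFinEquiv.injective.comp (σ.injective.comp inl_injective)
  have hsk (i) : s i ≠ k := finSumFinEquiv.injective.ne (σ.injective.ne inl_ne_inr)
  set e : Fin q → Fin (q + 1 + 1) := fun i => s (finSumFinEquiv (τ (inl i)))
  set j := s (finSumFinEquiv (τ (inr 0)))
  have hej (i) : e i ≠ j := hs.ne (finSumFinEquiv.injective.ne (τ.injective.ne inl_ne_inr))
  rcases h e j k (hs.comp (finSumFinEquiv.injective.comp (τ.injective.comp inl_injective)))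
    (hsk _) (fun i => ⟨hej i, hsk _⟩) with h | h | h
  · exact Or.inl h
  · exact Or.inr h
  · exact absurd h hk

theorem wedge_wedge_oneForm_eq_zero_of_basis {q : ℕ} {ι κ : Type*}
    (β : V [⋀^Fin q]→ₗ[ℝ] ℝ) (ξ η : V →ₗ[ℝ] ℝ) (b : Basis (ι ⊕ κ) ℝ V)
    (hb : ∀ i, b (inl i) ∈ LinearMap.ker ξ ⊓ LinearMap.ker η)
    (h : ∀ f : Fin q → ι ⊕ κ, Injective f → ∀ c d : κ, c ≠ d →
      (∀ i, f i ≠ inr c ∧ f i ≠ inr d) → β (b ∘ f) = 0) :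
    wedge (wedge β (oneForm ξ)) (oneForm η) = 0 := by
  refine b.ext_alternating fun v hv => ?_
  refine wedge_wedge_oneForm_apply_eq_zero _ _ _ _ fun e j k he hjk hejk => ?_
  rcases hvj : v j with i | c
  · exact Or.inr (Or.inl (by simpa [hvj] using (hb i).1))
  rcases hvk : v k with i | d
  · exact Or.inr (Or.inr (by simpa [hvk] using (hb i).2))
  refine Or.inl (h (v ∘ e) (hv.comp he) c d (fun hcd => hjk (hv (by rw [hvj, hvk, hcd]))) ?_)
  exact fun i => ⟨fun hi => (hejk i).1 (hv (hi.trans hvj.symm)),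
    fun hi => (hejk i).2 (hv (hi.trans hvk.symm))⟩

end Wedge

section Kernel

variable {V : Type*} [AddCommGroup V] [Module ℝ V] [FiniteDimensional ℝ V]

theorem wedge_wedge_oneForm_eq_zero_of_finrank_le_succ {q : ℕ} (β : V [⋀^Fin q]→ₗ[ℝ] ℝ)
    (ξ η : V →ₗ[ℝ] ℝ) (W : Submodule ℝ V) (hW : W ≤ LinearMap.ker ξ ⊓ LinearMap.ker η)
    (hdim : finrank ℝ V ≤ finrank ℝ W + 1) :
    wedge (wedge β (oneForm ξ)) (oneForm η) = 0 := by
  obtain ⟨m, b, hb, hm⟩ := W.exists_basis_sum_inl_mem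
  have : Subsingleton (Fin m) := Fin.subsingleton_iff_le_one.mpr (by omega)
  exact wedge_wedge_oneForm_eq_zero_of_basis β ξ η b (fun i => hW (hb i))
    fun _ _ c d hcd _ => absurd (Subsingleton.elim c d) hcd

theorem wedge_wedge_oneForm_eq_zero_of_compLinearMap_eq_zero {q : ℕ}
    (β : V [⋀^Fin q]→ₗ[ℝ] ℝ) (ξ η : V →ₗ[ℝ] ℝ) (D : Submodule ℝ V)
    (hD : D ≤ LinearMap.ker ξ ⊓ LinearMap.ker η) (hdim : finrank ℝ V ≤ finrank ℝ D + 2)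
    (hβ : β.compLinearMap D.subtype = 0) :
    wedge (wedge β (oneForm ξ)) (oneForm η) = 0 := by
  obtain ⟨m, b, hb, hm⟩ := D.exists_basis_sum_inl_mem
  refine wedge_wedge_oneForm_eq_zero_of_basis β ξ η b (fun i => hD (hb i))
    fun f _ c d hcd hf => ?_
  have hfD (i) : b (f i) ∈ D := by
    rcases hfi : f i with a | c'
    · exact hb a
    · have : 2 < Fintype.card (Fin m) := Fintype.two_lt_card_iff.mpr
        ⟨c', c, d, fun h => (hf i).1 (hfi ▸ h ▸ rfl), fun h => (hf i).2 (hfi ▸ h ▸ rfl), hcd⟩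
      simp only [Fintype.card_fin] at this
      omega
  exact DFunLike.congr_fun hβ fun i => ⟨b (f i), hfD i⟩

end Kernel

section WedgePow

variable {V : Type*} [AddCommGroup V] [Module ℝ V]

theorem wedgePow_apply_eq_zero (ω : V [⋀^Fin 2]→ₗ[ℝ] ℝ) {k : ℕ} (u : Fin (2 * k) → V)
    (i₀ : Fin (2 * k)) (h : ∀ j, ω ![u i₀, u j] = 0) : wedgePow ω k u = 0 := by
  induction k with
  | zero => exact i₀.elim0
  | succ k ih =>
    refine wedge_apply_eq_zero_of_forall_perm (wedgePow ω k) ω u fun σ => ?_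
    obtain ⟨a | a, ha⟩ := (σ.trans finSumFinEquiv).surjective i₀
    · exact Or.inl (ih _ a fun j => ha ▸ h _)
    · exact Or.inr (ω.apply_eq_zero_of_forall_fin_two _ a fun _ => ha ▸ h _)

theorem wedgePow_compLinearMap_subtype_eq_zero (ω : V [⋀^Fin 2]→ₗ[ℝ] ℝ) {m : ℕ}
    (D : Submodule ℝ V) [FiniteDimensional ℝ D] (hD : finrank ℝ D ≤ 2 * m) {v : V} (hvD : v ∈ D)
    (hv : v ≠ 0) (hω : ∀ w ∈ D, ω ![v, w] = 0) :
    (wedgePow ω m).compLinearMap D.subtype = 0 := by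
  have hs : LinearIndepOn ℝ id {(⟨v, hvD⟩ : D)} := .singleton (by simpa using hv)
  set b := Basis.extend hs
  refine b.ext_alternating fun f hf => ?_
  have hcard : Nat.card (Fin (2 * m)) ≥ Nat.card (hs.extend (Set.subset_univ _)) := by
    rw [← finrank_eq_nat_card_basis b, Nat.card_fin]; exact hD
  obtain ⟨i₀, hi₀⟩ := (hf.bijective_of_nat_card_le hcard).2 ⟨_, Basis.subset_extend hs rfl⟩
  refine wedgePow_apply_eq_zero ω _ i₀ fun j => ?_
  simpa [b, hi₀] using hω _ (b (f j)).2

end WedgePow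

theorem symplectic_on_kernel_of_top_wedge_ne_zero_general
    {V : Type*} [AddCommGroup V] [Module ℝ V] [FiniteDimensional ℝ V]
    {n : ℕ} (hdim : Module.finrank ℝ V = 2 * n)
    (ω : V [⋀^Fin 2]→ₗ[ℝ] ℝ) (ξ η : V →ₗ[ℝ] ℝ)
    (hne : wedge (wedge (wedgePow ω (n - 1)) (oneForm ξ)) (oneForm η) ≠ 0) :
    LinearIndependent ℝ ![ξ, η] ∧
    Module.finrank ℝ ↥(LinearMap.ker ξ ⊓ LinearMap.ker η) = 2 * n - 2 ∧
    ∀ v ∈ LinearMap.ker ξ ⊓ LinearMap.ker η, v ≠ 0 →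
      ∃ w ∈ LinearMap.ker ξ ⊓ LinearMap.ker η, ω ![v, w] ≠ 0 := by
  have hcodim := finrank_ker_inf_ker_add_finrank_span ξ η
  have hspan_le := finrank_range_le_card (R := ℝ) ![ξ, η]
  rw [Fintype.card_fin] at hspan_le
  have hind : LinearIndependent ℝ ![ξ, η] := by
    rw [linearIndependent_iff_card_eq_finrank_span, Fintype.card_fin]
    by_contra hdep
    exact hne (wedge_wedge_oneForm_eq_zero_of_finrank_le_succ _ ξ η _ le_rfl (by omega))
  have hspan := linearIndependent_iff_card_eq_finrank_span.mp hind
  rw [Fintype.card_fin] at hspan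
  refine ⟨hind, by omega, fun v hvD hv => ?_⟩
  by_contra! hdeg
  exact hne (wedge_wedge_oneForm_eq_zero_of_compLinearMap_eq_zero _ ξ η _ le_rfl (by omega)
    (wedgePow_compLinearMap_subtype_eq_zero ω _ (by omega) hvD hv hdeg))

/-- Let `V` be a real vector space of dimension `2n`, `n ≥ 1`, `ω` an
alternating `2`-form and `ξ`, `η` linear functionals on `V` such that the `2n`-form
`ω^(n-1) ∧ ξ ∧ η` is nonzero.  Then `ξ` and `η` are linearly independent, the subspace
`D = ker ξ ∩ ker η` has dimension `2n - 2`, and the restriction of `ω` to `D` is a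
nondegenerate alternating `2`-form on `D`. -/
theorem symplectic_on_kernel_of_top_wedge_ne_zero
    {V : Type*} [AddCommGroup V] [Module ℝ V] [FiniteDimensional ℝ V]
    {n : ℕ} (hn : 1 ≤ n) (hdim : Module.finrank ℝ V = 2 * n)
    (ω : V [⋀^Fin 2]→ₗ[ℝ] ℝ) (ξ η : V →ₗ[ℝ] ℝ)
    (hne : wedge (wedge (wedgePow ω (n - 1)) (oneForm ξ)) (oneForm η) ≠ 0) :
    LinearIndependent ℝ ![ξ, η] ∧
    Module.finrank ℝ ↥(LinearMap.ker ξ ⊓ LinearMap.ker η) = 2 * n - 2 ∧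
    ∀ v ∈ LinearMap.ker ξ ⊓ LinearMap.ker η, v ≠ 0 →
      ∃ w ∈ LinearMap.ker ξ ⊓ LinearMap.ker η, ω ![v, w] ≠ 0 :=
  symplectic_on_kernel_of_top_wedge_ne_zero_general hdim ω ξ η hne
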